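/- arXiv:1909.12626 — 2 statements merged into one kernel-verified Lean document; each statement's English description precedes it below -/
import Mathlib

section
/- Let 𝒫 = (P, Γ, Δ, Δ_c) be a self-modifying pushdown system in which every rule of Δ has the form ⟨p,γ⟩ ↪ ⟨p',w⟩ with |w| ≤ 2, let 𝒜 = (Q, Γ, T, P, F) be a 𝒫-automaton with no transitions leading to an initial state, and let 𝒜_post* = (Q', Γ, T', P, F) be its post*-saturation. If (p,θ) —w→_{T'} q is a path of 𝒜_post* and q ∈ Q (i.e., q is a state of the original automaton 𝒜), then there exist p' ∈ P, w' ∈ Γ* and a phase θ0 such that (⟨p',w'⟩, θ0) ⇒*_𝒫 (⟨p,w⟩, θ) and (p',θ0) —w'→_T q is a path of the initial automaton 𝒜. -/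
/-- Rules of a self-modifying pushdown system (SM-PDS). -/
inductive SMRule (P Γ : Type) : Type
  | basic : P → Γ → P → List Γ → SMRule P Γ
  | modif : P → SMRule P Γ → SMRule P Γ → P → SMRule P Γ

/-- A phase: a (current) set of rules. -/
abbrev Phase (P Γ : Type) := Set (SMRule P Γ)

/-- A configuration `(⟨p,w⟩, θ)` of an SM-PDS. -/
abbrev SMConf (P Γ : Type) := P × List Γ × Phase P Γ

/-- The transition relation `⇒_𝒫` of the SM-PDS `(P, Γ, Δ, Δc)`. -/
inductive SMStep {P Γ : Type} (Δ Δc : Set (SMRule P Γ)) : SMConf P Γ → SMConf P Γ → Prop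
  | basic {p γ p' w' w θ} :
      SMRule.basic p γ p' w' ∈ Δ → SMRule.basic p γ p' w' ∈ θ →
      SMStep Δ Δc (p, γ :: w, θ) (p', w' ++ w, θ)
  | modif {p r1 r2 p' w θ} :
      SMRule.modif p r1 r2 p' ∈ Δc → SMRule.modif p r1 r2 p' ∈ θ → r1 ∈ θ →
      SMStep Δ Δc (p, w, θ) (p', w, (θ \ {r1}) ∪ {r2})

/-- Paths `q —w→_T q'` (for `w ∈ Γ*`) in an automaton with transitions
`T ⊆ Q × (Γ ∪ {ε}) × Q` (`none` is the label ε). -/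
inductive APath {Q Γ : Type} (T : Set (Q × Option Γ × Q)) : Q → List Γ → Q → Prop
  | refl (q : Q) : APath T q [] q
  | eps {q q' q'' : Q} {w : List Γ} :
      (q, none, q') ∈ T → APath T q' w q'' → APath T q w q''
  | cons {q q' q'' : Q} {γ : Γ} {w : List Γ} :
      (q, some γ, q') ∈ T → APath T q' w q'' → APath T q (γ :: w) q''

/-- The states `Q'` of `𝒜_post*`: the states of `𝒜` (`Sum.inl`) together with
the fresh states `q_{p'γ1}^θ` (`Sum.inr (p', γ1, θ)`). -/
abbrev PostState (P Γ Q : Type) := Q ⊕ (P × Γ × Phase P Γ)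

/-- `S` is closed under the post*-saturation rules (β1)–(β4), where
`st p θ` denotes the initial state `(p,θ)` of the 𝒫-automaton. -/
def PostClosed {P Γ Q : Type} (Δ Δc : Set (SMRule P Γ)) (st : P → Phase P Γ → Q)
    (S : Set (PostState P Γ Q × Option Γ × PostState P Γ Q)) : Prop :=
  -- (β1)
  (∀ p γ p' θ q, SMRule.basic p γ p' [] ∈ Δ → θ ⊆ Δ ∪ Δc →
      SMRule.basic p γ p' [] ∈ θ →
      APath S (Sum.inl (st p θ)) [γ] q → (Sum.inl (st p' θ), none, q) ∈ S) ∧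
  -- (β2)
  (∀ p γ p' γ' θ q, SMRule.basic p γ p' [γ'] ∈ Δ → θ ⊆ Δ ∪ Δc →
      SMRule.basic p γ p' [γ'] ∈ θ →
      APath S (Sum.inl (st p θ)) [γ] q → (Sum.inl (st p' θ), some γ', q) ∈ S) ∧
  -- (β3)
  (∀ p γ p' γ1 γ2 θ q, SMRule.basic p γ p' [γ1, γ2] ∈ Δ → θ ⊆ Δ ∪ Δc →
      SMRule.basic p γ p' [γ1, γ2] ∈ θ →
      APath S (Sum.inl (st p θ)) [γ] q →
      (Sum.inl (st p' θ), some γ1, Sum.inr (p', γ1, θ)) ∈ S ∧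
      (Sum.inr (p', γ1, θ), some γ2, q) ∈ S) ∧
  -- (β4)
  (∀ p r1 r2 p' θ γ q, SMRule.modif p r1 r2 p' ∈ Δc → θ ⊆ Δ ∪ Δc →
      SMRule.modif p r1 r2 p' ∈ θ → r1 ∈ θ →
      APath S (Sum.inl (st p θ)) [γ] q →
      (Sum.inl (st p' ((θ \ {r1}) ∪ {r2})), some γ, q) ∈ S)

/-- The transitions of `𝒜` viewed as transitions over the states of `𝒜_post*`. -/
def liftT {Q Γ NS : Type} (T : Set (Q × Option Γ × Q)) :
    Set ((Q ⊕ NS) × Option Γ × (Q ⊕ NS)) :=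
  {t | ∃ q a q', (q, a, q') ∈ T ∧ t = (Sum.inl q, a, Sum.inl q')}

/-- The transitions `T'` of `𝒜_post*`: the smallest set containing (the lift
of) `T` and closed under the saturation rules (β1)–(β4). -/
def postStar {P Γ Q : Type} (Δ Δc : Set (SMRule P Γ)) (st : P → Phase P Γ → Q)
    (T : Set (Q × Option Γ × Q)) :
    Set (PostState P Γ Q × Option Γ × PostState P Γ Q) :=
  ⋂₀ {S | liftT T ⊆ S ∧ PostClosed Δ Δc st S}

section AuxDev

variable {P Γ Q : Type} (Δ Δc : Set (SMRule P Γ)) (st : P → Phase P Γ → Q)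
  (T : Set (Q × Option Γ × Q))

/-- Size-indexed derivations of the transitions (`b = false`, labels `[]` or
`[γ]`) and paths (`b = true`) of the saturated automaton. -/
inductive PPn : ℕ → Bool → PostState P Γ Q → List Γ → PostState P Γ Q → Prop where
  | base {q a q'} : (q, a, q') ∈ T → PPn 1 false (.inl q) a.toList (.inl q')
  | b1 {n p γ p' θ q} : SMRule.basic p γ p' [] ∈ Δ → θ ⊆ Δ ∪ Δc →
      SMRule.basic p γ p' [] ∈ θ → PPn n true (.inl (st p θ)) [γ] q →
      PPn (n + 1) false (.inl (st p' θ)) [] q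
  | b2 {n p γ p' γ' θ q} : SMRule.basic p γ p' [γ'] ∈ Δ → θ ⊆ Δ ∪ Δc →
      SMRule.basic p γ p' [γ'] ∈ θ → PPn n true (.inl (st p θ)) [γ] q →
      PPn (n + 1) false (.inl (st p' θ)) [γ'] q
  | b3a {n p γ p' γ1 γ2 θ q} : SMRule.basic p γ p' [γ1, γ2] ∈ Δ → θ ⊆ Δ ∪ Δc →
      SMRule.basic p γ p' [γ1, γ2] ∈ θ → PPn n true (.inl (st p θ)) [γ] q →
      PPn (n + 1) false (.inl (st p' θ)) [γ1] (.inr (p', γ1, θ))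
  | b3b {n p γ p' γ1 γ2 θ q} : SMRule.basic p γ p' [γ1, γ2] ∈ Δ → θ ⊆ Δ ∪ Δc →
      SMRule.basic p γ p' [γ1, γ2] ∈ θ → PPn n true (.inl (st p θ)) [γ] q →
      PPn (n + 1) false (.inr (p', γ1, θ)) [γ2] q
  | b4 {n p r1 r2 p' θ γ q} : SMRule.modif p r1 r2 p' ∈ Δc → θ ⊆ Δ ∪ Δc →
      SMRule.modif p r1 r2 p' ∈ θ → r1 ∈ θ → PPn n true (.inl (st p θ)) [γ] q →
      PPn (n + 1) false (.inl (st p' ((θ \ {r1}) ∪ {r2}))) [γ] q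
  | refl (q) : PPn 0 true q [] q
  | step {n1 n2 q l q' w q''} : PPn n1 false q l q' → PPn n2 true q' w q'' →
      PPn (n1 + n2) true q (l ++ w) q''

/-- The set of derivable transitions. -/
def edgeSet : Set (PostState P Γ Q × Option Γ × PostState P Γ Q) :=
  {t | ∃ n, PPn Δ Δc st T n false t.1 t.2.1.toList t.2.2}

theorem apath_mono {Q' : Type} {S S' : Set (Q' × Option Γ × Q')} (hss : S ⊆ S')
    {q w q'} (h : APath S q w q') : APath S' q w q' := by
  induction h with
  | refl q => exact .refl q
  | eps ht _ ih => exact .eps (hss ht) ih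
  | cons ht _ ih => exact .cons (hss ht) ih

theorem apath_edgeSet_ppn {q w q'}
    (h : APath (edgeSet Δ Δc st T) q w q') : ∃ n, PPn Δ Δc st T n true q w q' := by
  induction h with
  | refl q => exact ⟨0, .refl q⟩
  | eps ht _ ih =>
    obtain ⟨m, hm⟩ := ht
    obtain ⟨k, hk⟩ := ih
    exact ⟨m + k, by simpa using hm.step hk⟩
  | cons ht _ ih =>
    obtain ⟨m, hm⟩ := ht
    obtain ⟨k, hk⟩ := ih
    exact ⟨m + k, by simpa using hm.step hk⟩

theorem liftT_sub_edgeSet : liftT T ⊆ edgeSet Δ Δc st T := by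
  rintro t ⟨q, a, q', hT, rfl⟩
  exact ⟨1, PPn.base hT⟩

theorem postClosed_edgeSet : PostClosed Δ Δc st (edgeSet Δ Δc st T) := by
  refine ⟨?_, ?_, ?_, ?_⟩
  · intro p γ p' θ q h1 h2 h3 hpath
    obtain ⟨m, hm⟩ := apath_edgeSet_ppn Δ Δc st T hpath
    exact ⟨m + 1, PPn.b1 h1 h2 h3 hm⟩
  · intro p γ p' γ' θ q h1 h2 h3 hpath
    obtain ⟨m, hm⟩ := apath_edgeSet_ppn Δ Δc st T hpath
    exact ⟨m + 1, PPn.b2 h1 h2 h3 hm⟩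
  · intro p γ p' γ1 γ2 θ q h1 h2 h3 hpath
    obtain ⟨m, hm⟩ := apath_edgeSet_ppn Δ Δc st T hpath
    exact ⟨⟨m + 1, PPn.b3a h1 h2 h3 hm⟩, ⟨m + 1, PPn.b3b h1 h2 h3 hm⟩⟩
  · intro p r1 r2 p' θ γ q h1 h2 h3 h4 hpath
    obtain ⟨m, hm⟩ := apath_edgeSet_ppn Δ Δc st T hpath
    exact ⟨m + 1, PPn.b4 h1 h2 h3 h4 hm⟩

theorem postStar_sub_edgeSet : postStar Δ Δc st T ⊆ edgeSet Δ Δc st T :=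
  Set.sInter_subset_of_mem ⟨liftT_sub_edgeSet Δ Δc st T, postClosed_edgeSet Δ Δc st T⟩

theorem ppn_false_pos {m q l q'} (h : PPn Δ Δc st T m false q l q') : 0 < m := by
  cases h <;> omega

theorem ppn_append : ∀ n1 {q u q'}, PPn Δ Δc st T n1 true q u q' →
    ∀ {n2 v q''}, PPn Δ Δc st T n2 true q' v q'' →
      PPn Δ Δc st T (n1 + n2) true q (u ++ v) q'' := by
  intro n1
  induction n1 using Nat.strong_induction_on with
  | _ n1 ih =>
    intro q u q' h1 n2 v q'' h2
    cases h1 with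
    | refl => simpa using h2
    | @step m k _ l q1 wr _ e rest =>
      have hm := ppn_false_pos Δ Δc st T e
      have h := e.step (ih k (by omega) rest h2)
      rw [Nat.add_assoc, List.append_assoc]
      exact h

/-- Paths from an old non-initial state only use transitions of `T`. -/
theorem ppn_flat (hnoinit : ∀ q a p θ, (q, a, st p θ) ∉ T) :
    ∀ n (q0 : Q) w qe, (∀ p θ, q0 ≠ st p θ) →
      PPn Δ Δc st T n true (.inl q0) w qe →
      ∃ qf, qe = Sum.inl qf ∧ APath T q0 w qf := by
  intro n
  induction n using Nat.strong_induction_on with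
  | _ n ih =>
    intro q0 w qe hq0 h
    cases h with
    | refl => exact ⟨q0, rfl, .refl q0⟩
    | @step n1 n2 _ l q1 w2 _ e rest =>
      cases e with
      | @base _ a q1' hT =>
        have hq1' : ∀ p θ, q1' ≠ st p θ := by
          intro p θ hc; exact hnoinit q0 a p θ (hc ▸ hT)
        obtain ⟨qf, rfl, hp⟩ := ih n2 (by omega) q1' w2 qe hq1' rest
        cases a with
        | none => exact ⟨qf, rfl, .eps hT hp⟩
        | some γ => exact ⟨qf, rfl, .cons hT hp⟩
      | b1 h1 h2 h3 prem => exact absurd rfl (hq0 _ _)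
      | b2 h1 h2 h3 prem => exact absurd rfl (hq0 _ _)
      | b3a h1 h2 h3 prem => exact absurd rfl (hq0 _ _)
      | b4 h1 h2 h3 h4 prem => exact absurd rfl (hq0 _ _)

theorem ppn_main (hst : Function.Injective fun x : P × Phase P Γ => st x.1 x.2)
    (hnoinit : ∀ q a p θ, (q, a, st p θ) ∉ T) :
    ∀ n p θ w q, θ ⊆ Δ ∪ Δc →
      PPn Δ Δc st T n true (.inl (st p θ)) w (.inl q) →
      ∃ (p' : P) (w' : List Γ) (θ0 : Phase P Γ), θ0 ⊆ Δ ∪ Δc ∧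
        Relation.ReflTransGen (SMStep Δ Δc) (p', w', θ0) (p, w, θ) ∧
        APath T (st p' θ0) w' q := by
  intro n
  induction n using Nat.strong_induction_on with
  | _ n ih =>
    intro p θ w q hθ h
    generalize hsrc : (Sum.inl (st p θ) : PostState P Γ Q) = src at h
    cases h with
    | refl =>
      injection hsrc with hq
      subst hq
      exact ⟨p, [], θ, hθ, .refl, .refl _⟩
    | @step n1 n2 _ l q1 w2 _ e rest =>
      cases e with
      | @base qq a q1' hT =>
        injection hsrc with hq
        subst hq
        have hq1' : ∀ p2 θ2, q1' ≠ st p2 θ2 := by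
          intro p2 θ2 hc; exact hnoinit _ a p2 θ2 (hc ▸ hT)
        obtain ⟨qf, hqf, hp⟩ := ppn_flat Δ Δc st T hnoinit n2 q1' w2 _ hq1' rest
        injection hqf with hqf'
        subst hqf'
        refine ⟨p, a.toList ++ w2, θ, hθ, .refl, ?_⟩
        cases a with
        | none => exact .eps hT hp
        | some γ => exact .cons hT hp
      | @b1 m p1 γ p2 θ2 qq1 hΔ hθ2 hmem prem =>
        injection hsrc with hq
        have e12 := @hst (_, _) (_, _) hq.symm
        injection e12 with e1 e2
        subst e1; subst e2
        have comb := ppn_append Δ Δc st T m prem rest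
        obtain ⟨p', w', θ0, h0, hsteps, hpath⟩ := ih (m + n2) (by omega) p1 _ _ q hθ comb
        refine ⟨p', w', θ0, h0, hsteps.tail ?_, hpath⟩
        have hstep := SMStep.basic (Δc := Δc) (w := w2) hΔ hmem
        simpa using hstep
      | @b2 m p1 γ p2 γ' θ2 qq1 hΔ hθ2 hmem prem =>
        injection hsrc with hq
        have e12 := @hst (_, _) (_, _) hq.symm
        injection e12 with e1 e2
        subst e1; subst e2
        have comb := ppn_append Δ Δc st T m prem rest
        obtain ⟨p', w', θ0, h0, hsteps, hpath⟩ := ih (m + n2) (by omega) p1 _ _ q hθ comb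
        refine ⟨p', w', θ0, h0, hsteps.tail ?_, hpath⟩
        have hstep := SMStep.basic (Δc := Δc) (w := w2) hΔ hmem
        simpa using hstep
      | @b3a m p1 γ p2 γ1 γ2 θ2 qX hΔ hθ2 hmem prem =>
        injection hsrc with hq
        have e12 := @hst (_, _) (_, _) hq.symm
        injection e12 with e1 e2
        subst e1; subst e2
        cases rest with
        | @step n3 n4 _ l2 q2 w3 _ e2 rest2 =>
          cases e2 with
          | @b3b m3 p3 γ0 pp γγ1 γγ2 θθ qq2 hΔ' hθ' hmem' prem2 =>
            have comb := ppn_append Δ Δc st T m3 prem2 rest2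
            obtain ⟨p', w', θ0, h0, hsteps, hpath⟩ :=
              ih (m3 + n4) (by omega) p3 _ _ q hθ comb
            refine ⟨p', w', θ0, h0, hsteps.tail ?_, hpath⟩
            have hstep := SMStep.basic (Δc := Δc) (w := w3) hΔ' hmem'
            simpa using hstep
      | @b3b m p1 γ p2 γ1 γ2 θ2 hΔ hθ2 hmem prem =>
        simp at hsrc
      | @b4 m p1 r1 r2 p2 θ1 γ qq1 hΔc' hθ1 hmem hr1 prem =>
        injection hsrc with hq
        have e12 := @hst (_, _) (_, _) hq.symm
        injection e12 with e1 e2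
        subst e1
        subst e2
        have comb := ppn_append Δ Δc st T m prem rest
        obtain ⟨p', w', θ0, h0, hsteps, hpath⟩ := ih (m + n2) (by omega) p1 θ1 _ q hθ1 comb
        refine ⟨p', w', θ0, h0, hsteps.tail ?_, hpath⟩
        have hstep := SMStep.modif (Δ := Δ) (w := γ :: w2) hΔc' hmem hr1
        simpa using hstep

end AuxDev

/-- if `(p,θ) —w→_{T'} q` is a path of `𝒜_post*` with `q` a state
of the original automaton `𝒜`, then there are `p'`, `w'` and a phase `θ0` with
`(⟨p',w'⟩,θ0) ⇒*_𝒫 (⟨p,w⟩,θ)` and `(p',θ0) —w'→_T q` a path of `𝒜`. -/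
theorem post_star_sound_old_state {P Γ Q : Type}
    (Δ Δc : Set (SMRule P Γ))
    (hΔbasic : ∀ r ∈ Δ, ∃ p γ p' w, r = SMRule.basic p γ p' w)
    (hΔcmodif : ∀ r ∈ Δc, ∃ p r1 r2 p',
        r = SMRule.modif p r1 r2 p' ∧ r1 ∈ Δ ∪ Δc ∧ r2 ∈ Δ ∪ Δc)
    -- every rule of Δ pushes a word of length at most 2
    (hlen : ∀ p γ p' w, SMRule.basic p γ p' w ∈ Δ → w.length ≤ 2)
    -- the 𝒫-automaton 𝒜 = (Q, Γ, T, P, F): initial states `st p θ`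
    (st : P → Phase P Γ → Q)
    (hst : Function.Injective fun x : P × Phase P Γ => st x.1 x.2)
    (T : Set (Q × Option Γ × Q)) (F : Set Q)
    -- no transitions lead to an initial state
    (hnoinit : ∀ q a p θ, (q, a, st p θ) ∉ T)
    (p : P) (w : List Γ) (θ : Phase P Γ) (hθ : θ ⊆ Δ ∪ Δc) (q : Q)
    (hpath : APath (postStar Δ Δc st T) (Sum.inl (st p θ)) w (Sum.inl q)) :
    ∃ (p' : P) (w' : List Γ) (θ0 : Phase P Γ), θ0 ⊆ Δ ∪ Δc ∧
      Relation.ReflTransGen (SMStep Δ Δc) (p', w', θ0) (p, w, θ) ∧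
      APath T (st p' θ0) w' q := by
  obtain ⟨n, hp⟩ := apath_edgeSet_ppn Δ Δc st T
    (apath_mono (postStar_sub_edgeSet Δ Δc st T) hpath)
  exact ppn_main Δ Δc st T hst hnoinit n p θ w q hθ hp
end

section
/- Let 𝒫 = (P, Γ, Δ, Δ_c) be a self-modifying pushdown system in which every rule of Δ has the form ⟨p,γ⟩ ↪ ⟨p',w⟩ with |w| ≤ 2, let 𝒜 = (Q, Γ, T, P, F) be a 𝒫-automaton with no transitions leading to an initial state, and let 𝒜_post* = (Q', Γ, T', P, F) be its post*-saturation. If (p,θ) —w→_{T'} q is a path of 𝒜_post* and q is a new state of the form q = q_{p1γ1}^{θ1}, then (⟨p1,γ1⟩, θ1) ⇒*_𝒫 (⟨p,w⟩, θ). -/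
/-!
Each state of `𝒜_post*` other than an old non-initial one stands for the top of a configuration:
`(p,θ)` for `(⟨p,ε⟩,θ)` and `q_{pγ}^θ` for `(⟨p,γ⟩,θ)`. Call a transition `s —a→ s'` sound if
`s'` is not initial and, when `s' = q_{p₁γ₁}^{θ₁}`, `s` stands for some `c` with
`(⟨p₁,γ₁⟩,θ₁) ⇒* c·a`. Sound transitions compose along paths, since `⇒*` is stable under
appending to the stack. The transitions of `𝒜` are sound because none enters an initial state,
and each of (β1)–(β4) produces sound transitions because it mirrors one step of `𝒫`. So every
transition of `𝒜_post*` is sound, and a path from `(p,θ)` to `q_{p₁γ₁}^{θ₁}` gives the claim.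
-/

open Relation

namespace APath

variable {Q Γ : Type} {S : Set (Q × Option Γ × Q)}

theorem eq_and_nil_or_exists_mem {s q : Q} {w : List Γ} (h : APath S s w q) :
    (s = q ∧ w = []) ∨ ∃ s' a, (s', a, q) ∈ S := by
  induction h with
  | refl => exact .inl ⟨rfl, rfl⟩
  | eps ht _ ih | cons ht _ ih =>
    rcases ih with ⟨rfl, -⟩ | hlast
    · exact .inr ⟨_, _, ht⟩
    · exact .inr hlast

end APath

namespace SMConf

variable {P Γ : Type}

def appendStack (c : SMConf P Γ) (v : List Γ) : SMConf P Γ := (c.1, c.2.1 ++ v, c.2.2)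

@[simp]
theorem appendStack_nil (c : SMConf P Γ) : c.appendStack [] = c := by
  simp [appendStack]

@[simp]
theorem appendStack_appendStack (c : SMConf P Γ) (u v : List Γ) :
    (c.appendStack u).appendStack v = c.appendStack (u ++ v) := by
  simp [appendStack]

end SMConf

section Soundness

variable {P Γ Q : Type} {Δ Δc : Set (SMRule P Γ)} {st : P → Phase P Γ → Q}

theorem SMStep.appendStack {c c' : SMConf P Γ} (h : SMStep Δ Δc c c') (v : List Γ) :
    SMStep Δ Δc (c.appendStack v) (c'.appendStack v) := by
  cases h with
  | basic hΔ hθ => simpa [SMConf.appendStack] using SMStep.basic hΔ hθ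
  | modif hΔc hθ hr1 => exact SMStep.modif hΔc hθ hr1

theorem SMStep.reflTransGen_appendStack {c c' : SMConf P Γ}
    (h : ReflTransGen (SMStep Δ Δc) c c') (v : List Γ) :
    ReflTransGen (SMStep Δ Δc) (c.appendStack v) (c'.appendStack v) :=
  h.lift (·.appendStack v) fun _ _ hstep => hstep.appendStack v

variable (st) in
inductive Represents : PostState P Γ Q → SMConf P Γ → Prop
  | init (p : P) (θ : Phase P Γ) : Represents (.inl (st p θ)) (p, [], θ)
  | new (p : P) (γ : Γ) (θ : Phase P Γ) : Represents (.inr (p, γ, θ)) (p, [γ], θ)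

theorem Represents.eq_of_inl (hst : Function.Injective fun x : P × Phase P Γ => st x.1 x.2)
    {p : P} {θ : Phase P Γ} {c : SMConf P Γ} (h : Represents st (.inl (st p θ)) c) :
    c = (p, [], θ) := by
  generalize hs : Sum.inl (st p θ) = s at h
  rcases h with ⟨p', θ'⟩ | _
  · obtain ⟨rfl, rfl⟩ := Prod.ext_iff.mp (@hst (p', θ') (p, θ) (Sum.inl_injective hs.symm))
    rfl
  · exact Sum.inl_ne_inr hs |>.elim

variable (Δ Δc st) in
structure SoundTransition (s : PostState P Γ Q) (a : Option Γ) (s' : PostState P Γ Q) : Prop where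
  not_initial : ∀ p θ, s' ≠ .inl (st p θ)
  reaches : ∀ p₁ γ₁ θ₁, s' = .inr (p₁, γ₁, θ₁) → ∃ c, Represents st s c ∧
    ReflTransGen (SMStep Δ Δc) (p₁, [γ₁], θ₁) (c.appendStack a.toList)

variable (Δ Δc st) in
def soundTransitions : Set (PostState P Γ Q × Option Γ × PostState P Γ Q) :=
  {t | SoundTransition Δ Δc st t.1 t.2.1 t.2.2}

theorem SoundTransition.reaches_cons {s s' : PostState P Γ Q} {a : Option Γ} {w : List Γ}
    {x : SMConf P Γ} (ht : SoundTransition Δ Δc st s a s')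
    (ih : ∃ c', Represents st s' c' ∧ ReflTransGen (SMStep Δ Δc) x (c'.appendStack w)) :
    ∃ c, Represents st s c ∧ ReflTransGen (SMStep Δ Δc) x (c.appendStack (a.toList ++ w)) := by
  obtain ⟨c', hc', hx⟩ := ih
  cases hc' with
  | init p θ => exact absurd rfl (ht.not_initial p θ)
  | new p γ θ =>
    obtain ⟨c, hc, hreach⟩ := ht.reaches p γ θ rfl
    refine ⟨c, hc, hx.trans ?_⟩
    simpa using SMStep.reflTransGen_appendStack hreach w

theorem APath.reaches_of_subset_soundTransitions
    {S : Set (PostState P Γ Q × Option Γ × PostState P Γ Q)} (hS : S ⊆ soundTransitions Δ Δc st)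
    {s q : PostState P Γ Q} {w : List Γ}
    (h : APath S s w q) (p₁ : P) (γ₁ : Γ) (θ₁ : Phase P Γ) (hq : q = .inr (p₁, γ₁, θ₁)) :
    ∃ c, Represents st s c ∧ ReflTransGen (SMStep Δ Δc) (p₁, [γ₁], θ₁) (c.appendStack w) := by
  induction h with
  | refl => subst hq; exact ⟨_, .new p₁ γ₁ θ₁, by rw [SMConf.appendStack_nil]⟩
  | eps ht _ ih => simpa using SoundTransition.reaches_cons (hS ht) (ih hq)
  | cons ht _ ih => simpa using SoundTransition.reaches_cons (hS ht) (ih hq)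

theorem soundTransition_of_step (hst : Function.Injective fun x : P × Phase P Γ => st x.1 x.2)
    {p : P} {γ : Γ} {θ : Phase P Γ} {s q : PostState P Γ Q} {a : Option Γ} {c : SMConf P Γ}
    (hpath : APath (soundTransitions Δ Δc st) (.inl (st p θ)) [γ] q) (hc : Represents st s c)
    (hstep : SMStep Δ Δc (p, [γ], θ) (c.appendStack a.toList)) :
    SoundTransition Δ Δc st s a q where
  not_initial := by
    obtain ⟨_, _, hlast⟩ := hpath.eq_and_nil_or_exists_mem.resolve_left (by simp)
    exact hlast.not_initial
  reaches p₁ γ₁ θ₁ hq := by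
    obtain ⟨c₀, hc₀, hreach⟩ := hpath.reaches_of_subset_soundTransitions subset_rfl p₁ γ₁ θ₁ hq
    rw [hc₀.eq_of_inl hst] at hreach
    exact ⟨c, hc, hreach.tail hstep⟩

theorem postClosed_soundTransitions
    (hst : Function.Injective fun x : P × Phase P Γ => st x.1 x.2) :
    PostClosed Δ Δc st (soundTransitions Δ Δc st) := by
  refine ⟨?β1, ?β2, ?β3, ?β4⟩
  case β1 =>
    intro p γ p' θ q hΔ _ hθ hpath
    exact soundTransition_of_step hst hpath (.init p' θ) (SMStep.basic hΔ hθ)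
  case β2 =>
    intro p γ p' γ' θ q hΔ _ hθ hpath
    exact soundTransition_of_step hst hpath (.init p' θ) (SMStep.basic hΔ hθ)
  case β3 =>
    intro p γ p' γ₁ γ₂ θ q hΔ _ hθ hpath
    refine ⟨⟨fun _ _ => Sum.inr_ne_inl, ?_⟩,
      soundTransition_of_step hst hpath (.new p' γ₁ θ) (SMStep.basic hΔ hθ)⟩
    rintro _ _ _ ⟨⟩
    exact ⟨_, .init p' θ, .refl⟩
  case β4 =>
    intro p r₁ r₂ p' θ γ q hΔc _ hθ hr₁ hpath
    exact soundTransition_of_step hst hpath (.init p' _) (SMStep.modif hΔc hθ hr₁)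

theorem liftT_subset_soundTransitions {T : Set (Q × Option Γ × Q)}
    (hnoinit : ∀ q a p θ, (q, a, st p θ) ∉ T) :
    liftT T ⊆ soundTransitions Δ Δc st := by
  rintro _ ⟨q, a, q', hT, rfl⟩
  refine ⟨?_, fun _ _ _ h => Sum.inl_ne_inr h |>.elim⟩
  rintro p θ hq
  exact hnoinit q a p θ (Sum.inl_injective hq ▸ hT)

end Soundness

theorem post_star_sound_new_state_general {P Γ Q : Type}
    (Δ Δc : Set (SMRule P Γ))
    -- the 𝒫-automaton 𝒜 = (Q, Γ, T, P, F): initial states `st p θ`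
    (st : P → Phase P Γ → Q)
    (hst : Function.Injective fun x : P × Phase P Γ => st x.1 x.2)
    (T : Set (Q × Option Γ × Q))
    -- no transitions lead to an initial state
    (hnoinit : ∀ q a p θ, (q, a, st p θ) ∉ T)
    (p : P) (w : List Γ) (θ : Phase P Γ)
    (p1 : P) (γ1 : Γ) (θ1 : Phase P Γ)
    (hpath : APath (postStar Δ Δc st T) (Sum.inl (st p θ)) w
        (Sum.inr (p1, γ1, θ1))) :
    Relation.ReflTransGen (SMStep Δ Δc) (p1, [γ1], θ1) (p, w, θ) := by
  have hsound : postStar Δ Δc st T ⊆ soundTransitions Δ Δc st :=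
    Set.sInter_subset_of_mem
      ⟨liftT_subset_soundTransitions hnoinit, postClosed_soundTransitions hst⟩
  obtain ⟨c, hc, hreach⟩ := hpath.reaches_of_subset_soundTransitions hsound p1 γ1 θ1 rfl
  rw [hc.eq_of_inl hst] at hreach
  exact hreach

/-- if `(p,θ) —w→_{T'} q` is a path of `𝒜_post*` with `q` a new
state `q_{p1γ1}^{θ1}`, then `(⟨p1,γ1⟩,θ1) ⇒*_𝒫 (⟨p,w⟩,θ)`. -/
theorem post_star_sound_new_state {P Γ Q : Type}
    (Δ Δc : Set (SMRule P Γ))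
    (hΔbasic : ∀ r ∈ Δ, ∃ p γ p' w, r = SMRule.basic p γ p' w)
    (hΔcmodif : ∀ r ∈ Δc, ∃ p r1 r2 p',
        r = SMRule.modif p r1 r2 p' ∧ r1 ∈ Δ ∪ Δc ∧ r2 ∈ Δ ∪ Δc)
    -- every rule of Δ pushes a word of length at most 2
    (hlen : ∀ p γ p' w, SMRule.basic p γ p' w ∈ Δ → w.length ≤ 2)
    -- the 𝒫-automaton 𝒜 = (Q, Γ, T, P, F): initial states `st p θ`
    (st : P → Phase P Γ → Q)
    (hst : Function.Injective fun x : P × Phase P Γ => st x.1 x.2)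
    (T : Set (Q × Option Γ × Q)) (F : Set Q)
    -- no transitions lead to an initial state
    (hnoinit : ∀ q a p θ, (q, a, st p θ) ∉ T)
    (p : P) (w : List Γ) (θ : Phase P Γ) (hθ : θ ⊆ Δ ∪ Δc)
    (p1 : P) (γ1 : Γ) (θ1 : Phase P Γ)
    (hpath : APath (postStar Δ Δc st T) (Sum.inl (st p θ)) w
        (Sum.inr (p1, γ1, θ1))) :
    Relation.ReflTransGen (SMStep Δ Δc) (p1, [γ1], θ1) (p, w, θ) :=
  post_star_sound_new_state_general Δ Δc st hst T hnoinit p w θ p1 γ1 θ1 hpath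
end
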